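/- Let T > 0 and let f : ℝ → ℝ be a real-valued Schwartz function. Then (1/π) ∫_{ℝ∖{0}} (k/(1 − e^{−k/T})) |f̂(k)|² dk ≥ (1/π) ∫_{0}^{∞} k |f̂(k)|² dk ≥ 0 (and in particular the left-hand integral converges absolutely). -/

import Mathlib

/-!
The Bose factor `B_T(k) = k / (1 - e^{-k/T})` satisfies `0 ≤ B_T(k)`, `k ≤ B_T(k)` and
`B_T(k) ≤ T + |k|`, the last two from `1 + x ≤ eˣ`. Since the Fourier transform of a Schwartz
function is again Schwartz, `(T + |k|) |f̂(k)|²` is integrable, and it dominates the thermal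
integrand. Comparing integrands on `(0, ∞) ⊆ ℝ ∖ {0}` then gives the inequality.
-/

open MeasureTheory Complex

/-- The Fourier transform `f̂(k) = ∫ f(u) e^{−iku} du` of an (integrable)
function `f : ℝ → ℂ`. -/
noncomputable def ft (f : ℝ → ℂ) (k : ℝ) : ℂ :=
  ∫ u : ℝ, f u * Complex.exp (-Complex.I * k * u)

open Real FourierTransform SchwartzMap

/-- At `k = 0` the division by zero gives `boseFactor T 0 = 0`, so the bounds below hold for
every `k`. -/
noncomputable def boseFactor (T k : ℝ) : ℝ := k / (1 - Real.exp (-k / T))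

section BoseFactor

variable {T : ℝ}

lemma one_sub_exp_neg_div_pos (hT : 0 < T) {k : ℝ} (hk : 0 < k) :
    0 < 1 - Real.exp (-k / T) := by
  have : -k / T < 0 := div_neg_of_neg_of_pos (neg_neg_of_pos hk) hT
  linarith [Real.exp_lt_one_iff.mpr this]

lemma one_sub_exp_neg_div_neg (hT : 0 < T) {k : ℝ} (hk : k < 0) :
    1 - Real.exp (-k / T) < 0 := by
  have : 0 < -k / T := div_pos (neg_pos.mpr hk) hT
  linarith [Real.one_lt_exp_iff.mpr this]

lemma boseFactor_nonneg (hT : 0 < T) (k : ℝ) : 0 ≤ boseFactor T k := by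
  rcases lt_trichotomy k 0 with hk | rfl | hk
  · exact div_nonneg_of_nonpos hk.le (one_sub_exp_neg_div_neg hT hk).le
  · simp [boseFactor]
  · exact div_nonneg hk.le (one_sub_exp_neg_div_pos hT hk).le

lemma le_boseFactor (hT : 0 < T) (k : ℝ) : k ≤ boseFactor T k := by
  rcases le_or_gt k 0 with hk | hk
  · exact hk.trans (boseFactor_nonneg hT k)
  · rw [boseFactor, le_div_iff₀ (one_sub_exp_neg_div_pos hT hk)]
    nlinarith [Real.exp_pos (-k / T)]

lemma boseFactor_le (hT : 0 < T) (k : ℝ) : boseFactor T k ≤ T + |k| := by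
  rcases lt_trichotomy k 0 with hk | rfl | hk
  · have hle : boseFactor T k ≤ T := by
      rw [boseFactor, div_le_iff_of_neg (one_sub_exp_neg_div_neg hT hk)]
      calc T * (1 - Real.exp (-k / T)) ≤ T * (1 - (-k / T + 1)) := by
            gcongr
            exact add_one_le_exp _
        _ = k := by field_simp; ring
    linarith [abs_nonneg k]
  · simp [boseFactor, hT.le]
  · have hdecay : (T + k) * Real.exp (-k / T) ≤ T :=
      calc (T + k) * Real.exp (-k / T) = T * ((k / T + 1) * Real.exp (-k / T)) := by
            field_simp; ring
        _ ≤ T * (Real.exp (k / T) * Real.exp (-k / T)) := by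
            gcongr
            exact add_one_le_exp _
        _ = T := by rw [← Real.exp_add, neg_div, add_neg_cancel, Real.exp_zero, mul_one]
    rw [boseFactor, abs_of_pos hk, div_le_iff₀ (one_sub_exp_neg_div_pos hT hk)]
    linarith

lemma abs_boseFactor_le (hT : 0 < T) (k : ℝ) : |boseFactor T k| ≤ T + |k| := by
  rw [abs_of_nonneg (boseFactor_nonneg hT k)]
  exact boseFactor_le hT k

lemma measurable_boseFactor (T : ℝ) : Measurable (boseFactor T) := by
  unfold boseFactor
  fun_prop

end BoseFactor

lemma ft_eq_fourier (g : ℝ → ℂ) (k : ℝ) : ft g k = 𝓕 g (k / (2 * π)) := by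
  rw [fourier_real_eq_integral_exp_smul]
  refine integral_congr_ae (ae_of_all _ fun u => ?_)
  have : (-2 * π * u * (k / (2 * π)) : ℝ) = -k * u := by field_simp
  simp only [smul_eq_mul, this]
  push_cast
  ring_nf

namespace SchwartzMap

variable {D V : Type*} [NormedAddCommGroup D] [NormedSpace ℝ D] [NormedAddCommGroup V]
  [NormedSpace ℝ V] [MeasurableSpace D] [BorelSpace D] [SecondCountableTopology D]

lemma integrable_pow_mul_norm_sq (μ : Measure D) [μ.HasTemperateGrowth] (f : 𝓢(D, V)) (n : ℕ) :
    Integrable (fun x ↦ ‖x‖ ^ n * ‖f x‖ ^ 2) μ := by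
  refine ((f.integrable_pow_mul μ n).const_mul (SchwartzMap.seminorm ℝ 0 0 f)).mono'
    (by fun_prop) (ae_of_all _ fun x => ?_)
  have hbound := f.norm_le_seminorm ℝ x
  have hweight : 0 ≤ ‖x‖ ^ n * ‖f x‖ := by positivity
  rw [norm_of_nonneg (by positivity)]
  nlinarith [mul_le_mul_of_nonneg_left hbound hweight]

end SchwartzMap

lemma continuous_ft (f : 𝓢(ℝ, ℂ)) : Continuous (ft f) := by
  simp_rw [funext (ft_eq_fourier f), ← SchwartzMap.fourier_coe]
  fun_prop

lemma integrable_mul_norm_ft_sq {w : ℝ → ℝ} {C : ℝ} (hw : Measurable w)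
    (hwC : ∀ k, |w k| ≤ C + |k|) (f : 𝓢(ℝ, ℂ)) :
    Integrable (fun k ↦ w k * ‖ft f k‖ ^ 2) := by
  set F : 𝓢(ℝ, ℂ) := 𝓕 f
  have hF : Integrable (fun x ↦ C * (‖x‖ ^ 0 * ‖F x‖ ^ 2) + 2 * π * (‖x‖ ^ 1 * ‖F x‖ ^ 2)) :=
    ((F.integrable_pow_mul_norm_sq volume 0).const_mul C).add
      ((F.integrable_pow_mul_norm_sq volume 1).const_mul _)
  -- `ft f k = F (k / 2π)`: rescaling turns the weight `C + 2π |x|` into `C + |k|`.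
  have hdom : Integrable (fun k ↦ (C + |k|) * ‖ft f k‖ ^ 2) := by
    convert hF.comp_mul_left' (inv_ne_zero (by positivity : 2 * π ≠ 0)) using 2 with k
    rw [ft_eq_fourier, SchwartzMap.fourier_coe]
    simp [abs_of_pos pi_pos]
    rw [show k / (2 * π) = π⁻¹ * 2⁻¹ * k by ring]
    field_simp
  refine hdom.mono'
    (hw.aestronglyMeasurable.mul ((continuous_ft f).norm.pow 2).aestronglyMeasurable)
    (ae_of_all _ fun k => ?_)
  rw [norm_mul, norm_pow, norm_norm, Real.norm_eq_abs]
  exact mul_le_mul_of_nonneg_right (hwC k) (by positivity)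

/-- Positivity of the thermal boundary two-point function at temperature `T > 0`
for a real-valued Schwartz function `f`: the thermal integral converges
absolutely and dominates the vacuum one, which is itself non-negative. -/
theorem thermal_boundary_two_point_positivity (T : ℝ) (hT : 0 < T) (f : SchwartzMap ℝ ℝ) :
    IntegrableOn
      (fun k : ℝ => k / (1 - Real.exp (-k / T)) * ‖ft (fun u => (f u : ℂ)) k‖ ^ 2)
      {(0 : ℝ)}ᶜ ∧
    (1 / Real.pi) *
        (∫ k in {(0 : ℝ)}ᶜ, k / (1 - Real.exp (-k / T)) * ‖ft (fun u => (f u : ℂ)) k‖ ^ 2) ≥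
      (1 / Real.pi) * ∫ k in Set.Ioi (0 : ℝ), k * ‖ft (fun u => (f u : ℂ)) k‖ ^ 2 ∧
    0 ≤ (1 / Real.pi) * ∫ k in Set.Ioi (0 : ℝ), k * ‖ft (fun u => (f u : ℂ)) k‖ ^ 2 := by
  set F : 𝓢(ℝ, ℂ) := f.postcompCLM ofRealCLM
  have hF : (fun u => (f u : ℂ)) = F := rfl
  rw [hF]
  have hthermal : Integrable (fun k ↦ boseFactor T k * ‖ft F k‖ ^ 2) :=
    integrable_mul_norm_ft_sq (measurable_boseFactor T) (abs_boseFactor_le hT) F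
  have hvacuum : Integrable (fun k ↦ k * ‖ft F k‖ ^ 2) :=
    integrable_mul_norm_ft_sq measurable_id (C := T) (fun k ↦ by simp [hT.le]) F
  refine ⟨hthermal.integrableOn, ?_, ?_⟩
  · gcongr
    calc ∫ k in Set.Ioi 0, k * ‖ft F k‖ ^ 2
        ≤ ∫ k in Set.Ioi 0, boseFactor T k * ‖ft F k‖ ^ 2 :=
          setIntegral_mono hvacuum.integrableOn hthermal.integrableOn fun k ↦
            mul_le_mul_of_nonneg_right (le_boseFactor hT k) (by positivity)
      _ ≤ ∫ k in {0}ᶜ, boseFactor T k * ‖ft F k‖ ^ 2 :=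
          setIntegral_mono_set hthermal.integrableOn
            (ae_of_all _ fun k ↦ mul_nonneg (boseFactor_nonneg hT k) (by positivity))
            (show Set.Ioi (0 : ℝ) ⊆ {0}ᶜ from fun _ hk ↦ ne_of_gt hk).eventuallyLE
  · exact mul_nonneg (by positivity) (setIntegral_nonneg measurableSet_Ioi fun k hk ↦
      mul_nonneg (le_of_lt hk) (by positivity))
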